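/- arXiv:2001.07805 — 2 statements merged into one kernel-verified Lean document; each statement's English description precedes it below -/
import Mathlib

section
/- (Breakdown point lower bound, TV corruption) Let p* be a Borel probability measure on ℝ^d that is halfspace-symmetric with center μ*, and let 0 ≤ ε < 1/4. Then there exists a finite constant B such that for every Borel probability measure p on ℝ^d with TV(p, p*) ≤ ε and every Tukey median x of p, ‖x − μ*‖ ≤ B. (Hence the breakdown point of the Tukey median under TV corruption is at least 1/4 for every halfspace-symmetric distribution.) -/
open MeasureTheory
open scoped RealInnerProductSpace ENNReal

noncomputable section

abbrev Euc (d : ℕ) := EuclideanSpace ℝ (Fin d)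

/-- Tukey depth of a point `μ` w.r.t. a measure `p`: the infimum over nonzero
directions `v` of the mass of the halfspace `{x | ⟪v, x - μ⟫ ≥ 0}`. -/
def tukeyDepth {d : ℕ} (μ : Euc d) (p : Measure (Euc d)) : ℝ :=
  ⨅ v : {v : Euc d // v ≠ 0}, (p {x | 0 ≤ ⟪(v : Euc d), x - μ⟫}).toReal

/-- `x` is a Tukey median of `p` if it maximizes the Tukey depth. -/
def IsTukeyMedian {d : ℕ} (x : Euc d) (p : Measure (Euc d)) : Prop :=
  ∀ y : Euc d, tukeyDepth y p ≤ tukeyDepth x p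

/-- Total variation distance: supremum over Borel sets `A` of `p A - q A`. -/
def tvDist {d : ℕ} (p q : Measure (Euc d)) : ℝ :=
  ⨆ A : {A : Set (Euc d) // MeasurableSet A}, ((p A).toReal - (q A).toReal)

/-- The halfspace metric `TV~(p, q)`. -/
def halfspaceDist {d : ℕ} (p q : Measure (Euc d)) : ℝ :=
  ⨆ vt : Euc d × ℝ,
    |(p {x | vt.2 ≤ ⟪vt.1, x⟫}).toReal - (q {x | vt.2 ≤ ⟪vt.1, x⟫}).toReal|

/-- Halfspace symmetry around `μ`: every one-dimensional projection of `X - μ`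
is symmetric in distribution. -/
def IsHalfspaceSymmetric {d : ℕ} (p : Measure (Euc d)) (μ : Euc d) : Prop :=
  ∀ v : Euc d,
    p.map (fun x => ⟪v, x - μ⟫) = p.map (fun x => -⟪v, x - μ⟫)

/-- Decay function `h(t)` of a measure `p` centered at `μ`. -/
def decay {d : ℕ} (p : Measure (Euc d)) (μ : Euc d) (t : ℝ) : ℝ :=
  ⨆ v : {v : Euc d // ‖v‖ ≤ 1}, (p {x | t < ⟪(v : Euc d), x - μ⟫}).toReal

/-!
Halfspace symmetry gives every closed halfspace through `μ*` mass at least `1/2` under `p*`,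
so after an `ε`-corruption in total variation the depth of `μ*` is still at least `1/2 - ε`.
A point `x` far from `μ*` is cut off by the halfspace through `x` facing away from `μ*`; that
halfspace lies outside the ball of radius `‖x - μ*‖` around `μ*`, so its `p`-mass is at most the
`p*`-tail beyond that radius plus `ε`. Once the tail is below `1/2 - 2ε`, which happens for
large radii by continuity of `p*` from above, `x` is strictly shallower than `μ*` and cannot be
a Tukey median.
-/

open Metric Filter Topology

lemma norm_sub_le_norm_sub_of_inner_nonneg {E : Type*} [NormedAddCommGroup E]
    [InnerProductSpace ℝ E] {x y μ : E} (h : 0 ≤ ⟪x - μ, y - x⟫) : ‖x - μ‖ ≤ ‖y - μ‖ := by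
  have hsplit : ⟪x - μ, y - μ⟫ = ⟪x - μ, y - x⟫ + ‖x - μ‖ ^ 2 := by
    rw [← real_inner_self_eq_norm_sq, ← inner_add_right, sub_add_sub_cancel]
  have hcs : ⟪x - μ, y - μ⟫ ≤ ‖x - μ‖ * ‖y - μ‖ := real_inner_le_norm _ _
  nlinarith [norm_nonneg (x - μ), norm_nonneg (y - μ)]

lemma exists_measure_compl_closedBall_lt {X : Type*} [PseudoMetricSpace X] [MeasurableSpace X]
    [OpensMeasurableSpace X] (μ : Measure X) [IsFiniteMeasure μ] (c : X) {δ : ℝ≥0∞}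
    (hδ : 0 < δ) : ∃ R : ℝ, μ (closedBall c R)ᶜ < δ := by
  have hempty : ⋂ R : ℝ, (closedBall c R)ᶜ = ∅ :=
    Set.iInter_eq_empty_iff.2 fun y => ⟨dist y c, fun hy => hy (mem_closedBall.2 le_rfl)⟩
  have hlim : Tendsto (fun R : ℝ => μ (closedBall c R)ᶜ) atTop (𝓝 0) := by
    have h := tendsto_measure_iInter_atTop (μ := μ) (s := fun R : ℝ => (closedBall c R)ᶜ)
      (fun R => measurableSet_closedBall.compl.nullMeasurableSet)
      (fun R R' hRR' => Set.compl_subset_compl.2 (closedBall_subset_closedBall hRR'))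
      ⟨0, measure_ne_top μ _⟩
    rwa [hempty, measure_empty] at h
  exact (hlim.eventually_lt_const hδ).exists

section

variable {d : ℕ}

lemma measurableSet_halfspace (v μ : Euc d) : MeasurableSet {x : Euc d | 0 ≤ ⟪v, x - μ⟫} :=
  measurableSet_le measurable_const (by fun_prop)

lemma toReal_sub_le_tvDist (p q : Measure (Euc d)) [IsFiniteMeasure p] {A : Set (Euc d)}
    (hA : MeasurableSet A) : (p A).toReal - (q A).toReal ≤ tvDist p q := by
  refine le_ciSup (f := fun A : {A : Set (Euc d) // MeasurableSet A} =>
    (p A).toReal - (q A).toReal) ⟨(p Set.univ).toReal, ?_⟩ ⟨A, hA⟩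
  rintro _ ⟨B, rfl⟩
  have hB : (p B).toReal ≤ (p Set.univ).toReal :=
    ENNReal.toReal_mono (measure_ne_top p _) (measure_mono (Set.subset_univ _))
  simp only
  linarith [ENNReal.toReal_nonneg (a := q B)]

lemma toReal_sub_tvDist_le (p q : Measure (Euc d)) [IsProbabilityMeasure p]
    [IsProbabilityMeasure q] {A : Set (Euc d)} (hA : MeasurableSet A) :
    (q A).toReal - tvDist p q ≤ (p A).toReal := by
  have h := toReal_sub_le_tvDist p q hA.compl
  rw [← measureReal_def, ← measureReal_def, probReal_compl_eq_one_sub hA,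
    probReal_compl_eq_one_sub hA] at h
  rw [← measureReal_def, ← measureReal_def]
  linarith

lemma tukeyDepth_le_measure_halfspace (p : Measure (Euc d)) (μ : Euc d) {v : Euc d}
    (hv : v ≠ 0) : tukeyDepth μ p ≤ (p {x | 0 ≤ ⟪v, x - μ⟫}).toReal :=
  ciInf_le ⟨0, by rintro _ ⟨w, rfl⟩; exact ENNReal.toReal_nonneg⟩ (⟨v, hv⟩ : {v : Euc d // v ≠ 0})

lemma tukeyDepth_le_measure_norm_sub_ge_add_tvDist (p q : Measure (Euc d)) [IsFiniteMeasure p]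
    [IsFiniteMeasure q] {x μ : Euc d} (hxμ : x ≠ μ) :
    tukeyDepth x p ≤ (q {y | ‖x - μ‖ ≤ ‖y - μ‖}).toReal + tvDist p q := by
  have hcut : {y | 0 ≤ ⟪x - μ, y - x⟫} ⊆ {y | ‖x - μ‖ ≤ ‖y - μ‖} := fun y hy =>
    norm_sub_le_norm_sub_of_inner_nonneg hy
  calc tukeyDepth x p ≤ (p {y | 0 ≤ ⟪x - μ, y - x⟫}).toReal :=
        tukeyDepth_le_measure_halfspace p x (sub_ne_zero.2 hxμ)
    _ ≤ (q {y | 0 ≤ ⟪x - μ, y - x⟫}).toReal + tvDist p q := by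
        linarith [toReal_sub_le_tvDist p q (measurableSet_halfspace (x - μ) x)]
    _ ≤ (q {y | ‖x - μ‖ ≤ ‖y - μ‖}).toReal + tvDist p q := by
        gcongr ?_ + _
        exact ENNReal.toReal_mono (measure_ne_top q _) (measure_mono hcut)

namespace IsHalfspaceSymmetric

variable {q : Measure (Euc d)} {μ : Euc d}

lemma one_half_le_measure_halfspace [IsProbabilityMeasure q] (hq : IsHalfspaceSymmetric q μ)
    (v : Euc d) : 1 / 2 ≤ (q {x | 0 ≤ ⟪v, x - μ⟫}).toReal := by
  have hf : Measurable fun x : Euc d => ⟪v, x - μ⟫ := by fun_prop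
  have hf' : Measurable fun x : Euc d => -⟪v, x - μ⟫ := hf.neg
  have hflip : q.real {x | 0 ≤ ⟪v, x - μ⟫} = q.real {x | ⟪v, x - μ⟫ ≤ 0} := by
    have h := congrArg (fun ν : Measure ℝ => ν.real (Set.Ici 0)) (hq v)
    simp only [map_measureReal_apply hf measurableSet_Ici,
      map_measureReal_apply hf' measurableSet_Ici] at h
    simpa [Set.preimage, neg_nonneg] using h
  have hcover : 1 ≤ q.real {x | 0 ≤ ⟪v, x - μ⟫} + q.real {x | ⟪v, x - μ⟫ ≤ 0} :=
    calc 1 = q.real ({x | 0 ≤ ⟪v, x - μ⟫} ∪ {x | ⟪v, x - μ⟫ ≤ 0}) := by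
          rw [← probReal_univ (μ := q)]
          congr
          ext x
          simp [le_total]
      _ ≤ _ := measureReal_union_le _ _
  rw [← measureReal_def]
  linarith

lemma one_half_sub_tvDist_le_tukeyDepth (p : Measure (Euc d)) [IsProbabilityMeasure p]
    [IsProbabilityMeasure q] [Nonempty {v : Euc d // v ≠ 0}] (hq : IsHalfspaceSymmetric q μ) :
    1 / 2 - tvDist p q ≤ tukeyDepth μ p :=
  le_ciInf fun v => by
    linarith [hq.one_half_le_measure_halfspace v,
      toReal_sub_tvDist_le p q (measurableSet_halfspace v μ)]

end IsHalfspaceSymmetric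

end

theorem tukey_breakdown_tv_general {d : ℕ}
    (pstar : Measure (Euc d)) [IsProbabilityMeasure pstar]
    (μstar : Euc d) (hsym : IsHalfspaceSymmetric pstar μstar)
    (ε : ℝ) (hε : ε < 1 / 4) :
    ∃ B : ℝ, ∀ p : Measure (Euc d), IsProbabilityMeasure p →
      tvDist p pstar ≤ ε →
      ∀ x : Euc d, IsTukeyMedian x p → ‖x - μstar‖ ≤ B := by
  obtain ⟨R, hR⟩ := exists_measure_compl_closedBall_lt pstar μstar
    (ENNReal.ofReal_pos.2 (by linarith : 0 < 1 / 2 - 2 * ε))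
  refine ⟨max R 0, fun p _ htv x hmed => ?_⟩
  by_contra! hfar
  have hxμ : x ≠ μstar := by
    rintro rfl
    simp at hfar
  have : Nonempty {v : Euc d // v ≠ 0} := ⟨⟨x - μstar, sub_ne_zero.2 hxμ⟩⟩
  have htail : (pstar {y | ‖x - μstar‖ ≤ ‖y - μstar‖}).toReal < 1 / 2 - 2 * ε := by
    refine ENNReal.toReal_lt_of_lt_ofReal ((measure_mono fun y hy => ?_).trans_lt hR)
    simp only [Set.mem_compl_iff, mem_closedBall, not_le, dist_eq_norm]
    exact (le_max_left R 0).trans_lt (hfar.trans_le hy)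
  linarith [hmed μstar, hsym.one_half_sub_tvDist_le_tukeyDepth p,
    tukeyDepth_le_measure_norm_sub_ge_add_tvDist p pstar hxμ]

/-- **Breakdown point lower bound, TV corruption.**
If `p*` is halfspace-symmetric with center `μ*` and `0 ≤ ε < 1/4`, then there is
a finite constant `B` such that every Tukey median of any `p` with
`TV(p, p*) ≤ ε` is within distance `B` of `μ*`. -/
theorem tukey_breakdown_tv {d : ℕ}
    (pstar : Measure (Euc d)) [IsProbabilityMeasure pstar]
    (μstar : Euc d) (hsym : IsHalfspaceSymmetric pstar μstar)
    (ε : ℝ) (hε0 : 0 ≤ ε) (hε : ε < 1 / 4) :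
    ∃ B : ℝ, ∀ p : Measure (Euc d), IsProbabilityMeasure p →
      tvDist p pstar ≤ ε →
      ∀ x : Euc d, IsTukeyMedian x p → ‖x - μstar‖ ≤ B :=
  tukey_breakdown_tv_general pstar μstar hsym ε hε
end
end

section
/- (Tetrahedron construction for the 1/4 breakdown upper bound) Let a₁, a₂, a₃, a₄ ∈ ℝ³ be affinely independent points, and let p = (1/4)(δ_{a₁} + δ_{a₂} + δ_{a₃} + δ_{a₄}) be the uniform distribution on these four points. Then every point x in the convex hull of {a₁, a₂, a₃, a₄} has Tukey depth D(x, p) = 1/4, and every point x outside this convex hull has Tukey depth D(x, p) = 0. In particular, every point of the tetrahedron is a Tukey median of p. -/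
open MeasureTheory
open scoped RealInnerProductSpace ENNReal

noncomputable section

/-!
A closed halfspace bounded by a hyperplane through a point of the convex hull of finitely many
points contains one of them, while a point outside the hull is strictly separated from it; so the
empirical measure of `n` points gives depth at least `1/n` inside the hull and `0` outside. When
the points form an affine basis, some barycentric coordinate `λᵢ` is positive at any given
`μ` (they sum to `1`), and the halfspace `{λᵢ ≥ λᵢ(μ)}` through `μ` contains `aᵢ` only: no point
has depth above `1/n`.
-/

section
variable {E : Type*} [NormedAddCommGroup E] [InnerProductSpace ℝ E]

theorem exists_inner_sub_nonneg_of_mem_convexHull {s : Set E} {x : E}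
    (hx : x ∈ convexHull ℝ s) (v : E) : ∃ y ∈ s, 0 ≤ ⟪v, y - x⟫ := by
  obtain ⟨y, hys, hxy⟩ := ((innerₛₗ ℝ v).convexOn (convex_convexHull ℝ s)
    ).exists_ge_of_mem_convexHull (subset_convexHull ℝ s) hx
  exact ⟨y, hys, by rw [inner_sub_right]; exact sub_nonneg.2 hxy⟩

theorem exists_inner_sub_neg_of_notMem [CompleteSpace E] {K : Set E} (hK : Convex ℝ K)
    (hKc : IsClosed K) {x : E} (hx : x ∉ K) : ∃ v : E, ∀ y ∈ K, ⟪v, y - x⟫ < 0 := by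
  obtain ⟨f, u, hfK, hfx⟩ := geometric_hahn_banach_closed_point hK hKc hx
  refine ⟨(InnerProductSpace.toDual ℝ E).symm f, fun y hy => ?_⟩
  rw [InnerProductSpace.toDual_symm_apply, map_sub]
  linarith [hfK y hy]

theorem AffineBasis.exists_inner_sub_neg {ι : Type*} [Fintype ι] [FiniteDimensional ℝ E]
    (b : AffineBasis ι ℝ E) (x : E) : ∃ i, ∃ v : E, ∀ j ≠ i, ⟪v, b j - x⟫ < 0 := by
  obtain ⟨i, -, hi⟩ : ∃ i ∈ Finset.univ, (0 : ℝ) < b.coord i x :=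
    Finset.exists_lt_of_sum_lt (by simp [b.sum_coord_apply_eq_one])
  refine ⟨i, (InnerProductSpace.toDual ℝ E).symm (b.coord i).linear.toContinuousLinearMap,
    fun j hj => ?_⟩
  rw [InnerProductSpace.toDual_symm_apply, LinearMap.coe_toContinuousLinearMap',
    ← vsub_eq_sub, AffineMap.linearMap_vsub, b.coord_apply_ne hj.symm, vsub_eq_sub]
  linarith
end

section
variable {α ι : Type*} [MeasurableSpace α] [Fintype ι]

def empiricalMeasure (a : ι → α) : Measure α :=
  (Fintype.card ι : ℝ≥0∞)⁻¹ • ∑ i, Measure.dirac (a i)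

open Classical in
theorem empiricalMeasure_apply (a : ι → α) {s : Set α} (hs : MeasurableSet s) :
    empiricalMeasure a s = (Finset.univ.filter fun i => a i ∈ s).card / Fintype.card ι := by
  simp [empiricalMeasure, Measure.dirac_apply' _ hs, Set.indicator_apply, Finset.sum_boole,
    ENNReal.div_eq_inv_mul]
end

section TukeyDepth
variable {d : ℕ}

theorem tukeyDepth_nonneg (μ : Euc d) (p : Measure (Euc d)) : 0 ≤ tukeyDepth μ p :=
  Real.iInf_nonneg fun _ => ENNReal.toReal_nonneg

theorem tukeyDepth_le {p : Measure (Euc d)} (μ : Euc d) {v : Euc d} (hv : v ≠ 0) :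
    tukeyDepth μ p ≤ (p {x | 0 ≤ ⟪v, x - μ⟫}).toReal :=
  ciInf_le ⟨0, by rintro _ ⟨w, rfl⟩; exact ENNReal.toReal_nonneg⟩
    (⟨v, hv⟩ : {v : Euc d // v ≠ 0})

theorem le_tukeyDepth [Nontrivial (Euc d)] {p : Measure (Euc d)} {μ : Euc d} {c : ℝ}
    (h : ∀ v ≠ 0, c ≤ (p {x | 0 ≤ ⟪v, x - μ⟫}).toReal) : c ≤ tukeyDepth μ p :=
  have : Nonempty {v : Euc d // v ≠ 0} := nonempty_subtype.2 (exists_ne 0)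
  le_ciInf fun v => h v v.2

variable {ι : Type*} [Fintype ι]

open Classical in
theorem empiricalMeasure_halfspace_toReal (a : ι → Euc d) (v μ : Euc d) :
    (empiricalMeasure a {x | 0 ≤ ⟪v, x - μ⟫}).toReal =
      (Finset.univ.filter fun i => 0 ≤ ⟪v, a i - μ⟫).card / Fintype.card ι := by
  have hs : MeasurableSet {x : Euc d | 0 ≤ ⟪v, x - μ⟫} :=
    measurableSet_le measurable_const (by fun_prop)
  simp [empiricalMeasure_apply a hs, ENNReal.toReal_div]

theorem tukeyDepth_empiricalMeasure_of_notMem_convexHull [Nonempty ι] (a : ι → Euc d)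
    {μ : Euc d} (hμ : μ ∉ convexHull ℝ (Set.range a)) :
    tukeyDepth μ (empiricalMeasure a) = 0 := by
  obtain ⟨v, hv⟩ := exists_inner_sub_neg_of_notMem (convex_convexHull ℝ _)
    ((Set.finite_range a).isClosed_convexHull (𝕜 := ℝ)) hμ
  have hva : ∀ i, ⟪v, a i - μ⟫ < 0 := fun i => hv _ (subset_convexHull ℝ _ ⟨i, rfl⟩)
  have hv0 : v ≠ 0 := by
    rintro rfl
    simpa using hva (Classical.arbitrary ι)
  refine le_antisymm ?_ (tukeyDepth_nonneg μ _)
  calc tukeyDepth μ (empiricalMeasure a) ≤ _ := tukeyDepth_le μ hv0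
    _ = 0 := by simp [empiricalMeasure_halfspace_toReal, (hva _).not_ge]

theorem inv_card_le_tukeyDepth_empiricalMeasure [Nontrivial (Euc d)] (a : ι → Euc d)
    {μ : Euc d} (hμ : μ ∈ convexHull ℝ (Set.range a)) :
    (Fintype.card ι : ℝ)⁻¹ ≤ tukeyDepth μ (empiricalMeasure a) := by
  refine le_tukeyDepth fun v _ => ?_
  obtain ⟨_, ⟨i, rfl⟩, hi⟩ := exists_inner_sub_nonneg_of_mem_convexHull hμ v
  rw [empiricalMeasure_halfspace_toReal, inv_eq_one_div]
  gcongr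
  exact_mod_cast Finset.card_pos.2 ⟨i, by simpa using hi⟩

theorem AffineBasis.tukeyDepth_empiricalMeasure_le [Nontrivial ι] (b : AffineBasis ι ℝ (Euc d))
    (μ : Euc d) : tukeyDepth μ (empiricalMeasure b) ≤ (Fintype.card ι : ℝ)⁻¹ := by
  classical
  obtain ⟨i, v, hv⟩ := b.exists_inner_sub_neg μ
  obtain ⟨j, hj⟩ := exists_ne i
  have hv0 : v ≠ 0 := by
    rintro rfl
    simpa using hv j hj
  have hcount : (Finset.univ.filter fun j => 0 ≤ ⟪v, b j - μ⟫) ⊆ {i} := by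
    intro j hj
    by_contra hji
    exact (hv j (by simpa using hji)).not_ge (by simpa using hj)
  calc tukeyDepth μ (empiricalMeasure b) ≤ _ := tukeyDepth_le μ hv0
    _ ≤ _ := by
      rw [empiricalMeasure_halfspace_toReal, inv_eq_one_div]
      gcongr
      exact_mod_cast (Finset.card_le_card hcount).trans (Finset.card_singleton i).le

theorem AffineBasis.tukeyDepth_empiricalMeasure_of_mem_convexHull [Nontrivial ι]
    (b : AffineBasis ι ℝ (Euc d)) {μ : Euc d} (hμ : μ ∈ convexHull ℝ (Set.range b)) :
    tukeyDepth μ (empiricalMeasure b) = (Fintype.card ι : ℝ)⁻¹ := by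
  obtain ⟨i, j, hij⟩ := exists_pair_ne ι
  have : Nontrivial (Euc d) := ⟨⟨b i, b j, b.ind.injective.ne hij⟩⟩
  exact (b.tukeyDepth_empiricalMeasure_le μ).antisymm
    (inv_card_le_tukeyDepth_empiricalMeasure b hμ)

theorem AffineBasis.isTukeyMedian_empiricalMeasure [Nontrivial ι] (b : AffineBasis ι ℝ (Euc d))
    {μ : Euc d} (hμ : μ ∈ convexHull ℝ (Set.range b)) :
    IsTukeyMedian μ (empiricalMeasure b) :=
  fun y => (b.tukeyDepth_empiricalMeasure_le y).trans
    (b.tukeyDepth_empiricalMeasure_of_mem_convexHull hμ).ge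

end TukeyDepth

/-- **Tetrahedron construction for the 1/4 breakdown upper bound.**
For affinely independent `a₁, a₂, a₃, a₄ ∈ ℝ³` and
`p = (1/4)(δ_{a₁} + δ_{a₂} + δ_{a₃} + δ_{a₄})`, every point of the convex hull
of the four points has Tukey depth `1/4` (and is a Tukey median of `p`), while
every point outside the convex hull has Tukey depth `0`. -/
theorem tetrahedron_tukey_depth
    (a : Fin 4 → Euc 3) (ha : AffineIndependent ℝ a)
    (p : Measure (Euc 3))
    (hp : p = (4⁻¹ : ℝ≥0∞) •
      (Measure.dirac (a 0) + Measure.dirac (a 1) +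
        Measure.dirac (a 2) + Measure.dirac (a 3))) :
    (∀ x ∈ convexHull ℝ (Set.range a),
      tukeyDepth x p = 1 / 4 ∧ IsTukeyMedian x p) ∧
    (∀ x ∉ convexHull ℝ (Set.range a), tukeyDepth x p = 0) := by
  let b : AffineBasis (Fin 4) ℝ (Euc 3) :=
    ⟨a, ha, ha.affineSpan_eq_top_iff_card_eq_finrank_add_one.2 (by simp)⟩
  have hb : ⇑b = a := rfl
  obtain rfl : p = empiricalMeasure b := by
    rw [hp, empiricalMeasure, Fin.sum_univ_four, hb, Fintype.card_fin]
    norm_num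
  refine ⟨fun x hx => ⟨?_, b.isTukeyMedian_empiricalMeasure hx⟩,
    fun x hx => tukeyDepth_empiricalMeasure_of_notMem_convexHull a hx⟩
  rw [b.tukeyDepth_empiricalMeasure_of_mem_convexHull hx, Fintype.card_fin]
  norm_num

end
end
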